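/- arXiv:1806.08275 — 2 statements merged into one kernel-verified Lean document; each statement's English description precedes it below -/
import Mathlib

section
/- Let f be a measurable function on ℝⁿ with bounded support (or more generally with f**(t) → 0 as t → ∞). Then ∫₀^∞ (f**(s) - f*(s)) ds/s = ‖f‖_{L^∞}, i.e. the L(∞,1) quasinorm of f equals its essential supremum norm. -/
open MeasureTheory Set Filter Topology
open scoped ENNReal

/-- The maximal average `f**(t) = (1/t) ∫₀ᵗ f*(s) ds`. -/
noncomputable def maxAvg (f : ℝ → ℝ) (t : ℝ) : ℝ := (1 / t) * ∫ s in Set.Ioo (0:ℝ) t, f s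

section aux
variable (fstar : ℝ → ℝ)

/-- right-continuous regularization -/
noncomputable def rreg (t : ℝ) : ℝ := sSup (fstar '' Ioi t)

variable {fstar}
variable (hmono : AntitoneOn fstar (Ioi 0))

lemma rreg_ne (t : ℝ) : (fstar '' Ioi t).Nonempty :=
  ⟨fstar (t+1), t+1, by simp [mem_Ioi], rfl⟩

include hmono

lemma rreg_bdd {t : ℝ} (ht : 0 < t) : BddAbove (fstar '' Ioi t) := by
  refine ⟨fstar t, ?_⟩
  rintro y ⟨u, hu, rfl⟩
  exact hmono (mem_Ioi.2 ht) (mem_Ioi.2 (ht.trans hu)) hu.le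

lemma rreg_le {t : ℝ} (ht : 0 < t) : rreg fstar t ≤ fstar t := by
  apply csSup_le (rreg_ne t)
  rintro y ⟨u, hu, rfl⟩
  exact hmono (mem_Ioi.2 ht) (mem_Ioi.2 (ht.trans hu)) hu.le

lemma le_rreg {t u : ℝ} (ht : 0 < t) (hu : t < u) : fstar u ≤ rreg fstar t :=
  le_csSup (rreg_bdd hmono ht) ⟨u, hu, rfl⟩

lemma rreg_anti : AntitoneOn (rreg fstar) (Ioi 0) := by
  intro t₁ ht₁ t₂ ht₂ h
  apply csSup_le (rreg_ne t₂)
  rintro y ⟨u, hu, rfl⟩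
  exact le_csSup (rreg_bdd hmono ht₁) ⟨u, lt_of_le_of_lt h hu, rfl⟩

lemma rreg_tendsto {t : ℝ} (ht : 0 < t) :
    Tendsto fstar (𝓝[>] t) (𝓝 (rreg fstar t)) := by
  rw [tendsto_order]
  constructor
  · intro c hc
    obtain ⟨y, ⟨u, hu, rfl⟩, hy⟩ := exists_lt_of_lt_csSup (rreg_ne t) hc
    filter_upwards [Ioo_mem_nhdsGT_of_mem (left_mem_Ico.2 hu)] with x hx
    exact lt_of_lt_of_le hy
      (hmono (mem_Ioi.2 (ht.trans hx.1)) (mem_Ioi.2 (ht.trans hu)) hx.2.le)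
  · intro c hc
    filter_upwards [self_mem_nhdsWithin] with x hx
    exact lt_of_le_of_lt (le_rreg hmono ht hx) hc

lemma rreg_bad_countable : {t : ℝ | 0 < t ∧ fstar t ≠ rreg fstar t}.Countable := by
  set B := {t : ℝ | 0 < t ∧ fstar t ≠ rreg fstar t} with hB
  have key : ∀ t : B, rreg fstar (t : ℝ) < fstar (t : ℝ) :=
    fun ⟨t, ht⟩ => lt_of_le_of_ne (rreg_le hmono ht.1) (Ne.symm ht.2)
  have : ∀ t : B, ∃ q : ℚ, rreg fstar (t : ℝ) < (q : ℝ) ∧ (q : ℝ) < fstar (t : ℝ) :=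
    fun t => exists_rat_btwn (key t)
  choose q hq1 hq2 using this
  have hinj : Function.Injective q := by
    intro t₁ t₂ h
    by_contra hne
    have hne' : (t₁ : ℝ) ≠ (t₂ : ℝ) := fun h' => hne (Subtype.ext h')
    rcases hne'.lt_or_gt with hlt | hlt
    · have h1 : fstar (t₂ : ℝ) ≤ rreg fstar (t₁ : ℝ) := le_rreg hmono t₁.2.1 hlt
      have := (hq2 t₂).trans_le (h1.trans (hq1 t₁).le)
      rw [h] at this; exact lt_irrefl _ this
    · have h1 : fstar (t₁ : ℝ) ≤ rreg fstar (t₂ : ℝ) := le_rreg hmono t₂.2.1 hlt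
      have := (hq2 t₁).trans_le (h1.trans (hq1 t₂).le)
      rw [h] at this; exact lt_irrefl _ this
  have : Countable B := hinj.countable
  exact Set.countable_coe_iff.1 this

end aux

section F
variable {fstar : ℝ → ℝ}

noncomputable def Fprim (fstar : ℝ → ℝ) (t : ℝ) : ℝ := ∫ s in Ioo (0:ℝ) t, fstar s

lemma maxAvg_eq_F (t : ℝ) : maxAvg fstar t = t⁻¹ * Fprim fstar t := by
  rw [maxAvg, Fprim, one_div]

variable (hmono : AntitoneOn fstar (Ioi 0))
  (hloc : LocallyIntegrableOn fstar (Ioi 0) volume)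
  (hIntAll : ∀ t : ℝ, 0 < t → IntegrableOn fstar (Ioo 0 t) volume)

include hloc in
lemma int_Ico {t u : ℝ} (ht : 0 < t) : IntegrableOn fstar (Ico t u) volume := by
  have h1 : IntegrableOn fstar (Icc t u) volume :=
    hloc.integrableOn_compact_subset (fun x hx => lt_of_lt_of_le ht hx.1) isCompact_Icc
  exact h1.mono_set Ico_subset_Icc_self

include hloc in
lemma int_Ioc {t u : ℝ} (ht : 0 < t) : IntegrableOn fstar (Ioc t u) volume := by
  have h1 : IntegrableOn fstar (Icc t u) volume :=
    hloc.integrableOn_compact_subset (fun x hx => lt_of_lt_of_le ht hx.1) isCompact_Icc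
  exact h1.mono_set Ioc_subset_Icc_self

include hloc hIntAll in
lemma Fprim_sub {t u : ℝ} (ht : 0 < t) (htu : t ≤ u) :
    Fprim fstar u - Fprim fstar t = ∫ s in Ioc t u, fstar s := by
  have hsplit : Ioo 0 t ∪ Ico t u = Ioo 0 u := Ioo_union_Ico_eq_Ioo ht htu
  have hdisj : Disjoint (Ioo (0:ℝ) t) (Ico t u) := by
    rw [Set.disjoint_left]
    rintro x hx hx'
    exact absurd hx.2 (not_lt.2 hx'.1)
  have := setIntegral_union hdisj measurableSet_Ico (hIntAll t ht) (int_Ico hloc ht)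
    (f := fstar) (μ := volume)
  rw [hsplit] at this
  rw [Fprim, Fprim, this, integral_Ico_eq_integral_Ioo, integral_Ioc_eq_integral_Ioo]
  ring

include hmono hloc hIntAll in
lemma Fprim_hasDeriv {t : ℝ} (ht : 0 < t) :
    HasDerivWithinAt (Fprim fstar) (rreg fstar t) (Ioi t) t := by
  rw [hasDerivWithinAt_iff_tendsto_slope' notMem_Ioi_self]
  apply tendsto_of_tendsto_of_tendsto_of_le_of_le' (rreg_tendsto hmono ht) tendsto_const_nhds
  · filter_upwards [self_mem_nhdsWithin] with u hu
    have hu' : t < u := hu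
    have hpos : (0:ℝ) < u - t := sub_pos.2 hu'
    rw [slope_def_field, Fprim_sub hloc hIntAll ht hu'.le, le_div_iff₀ hpos]
    have hconst : ∫ _ in Ioc t u, fstar u ∂volume = fstar u * (u - t) := by
      rw [setIntegral_const]
      simp [Real.volume_Ioc, ENNReal.toReal_ofReal hpos.le, max_eq_left hpos.le]
      ring
    rw [← hconst]
    refine setIntegral_mono_on ?_ ?_ measurableSet_Ioc ?_
    · exact integrableOn_const (by simp [Real.volume_Ioc])
    · exact int_Ioc hloc ht
    · intro x hx
      exact hmono (mem_Ioi.2 (ht.trans hx.1)) (mem_Ioi.2 (ht.trans hu')) hx.2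
  · filter_upwards [self_mem_nhdsWithin] with u hu
    have hu' : t < u := hu
    have hpos : (0:ℝ) < u - t := sub_pos.2 hu'
    rw [slope_def_field, Fprim_sub hloc hIntAll ht hu'.le, div_le_iff₀ hpos]
    have hconst : ∫ _ in Ioc t u, rreg fstar t ∂volume = rreg fstar t * (u - t) := by
      rw [setIntegral_const]
      simp [Real.volume_Ioc, ENNReal.toReal_ofReal hpos.le, max_eq_left hpos.le]
      ring
    rw [← hconst]
    refine setIntegral_mono_on ?_ ?_ measurableSet_Ioc ?_
    · exact int_Ioc hloc ht
    · exact integrableOn_const (by simp [Real.volume_Ioc])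
    · intro x hx
      exact le_rreg hmono ht hx.1

end F

section G
variable {fstar : ℝ → ℝ}
variable (hmono : AntitoneOn fstar (Ioi 0))
  (hloc : LocallyIntegrableOn fstar (Ioi 0) volume)
  (hIntAll : ∀ t : ℝ, 0 < t → IntegrableOn fstar (Ioo 0 t) volume)

include hloc hIntAll in
lemma contOn_maxAvg {a b : ℝ} (ha : 0 < a) : ContinuousOn (maxAvg fstar) (Icc a b) := by
  rcases le_or_gt a b with hab | hab
  · have h1 : ContinuousOn (fun x => ∫ t in Ioc a x, fstar t) (Icc a b) :=
      intervalIntegral.continuousOn_primitive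
        (hloc.integrableOn_compact_subset (fun x hx => lt_of_lt_of_le ha hx.1) isCompact_Icc)
    have h2 : ContinuousOn (fun x : ℝ => x⁻¹ * (Fprim fstar a + ∫ t in Ioc a x, fstar t))
        (Icc a b) := by
      refine ContinuousOn.mul ?_ (continuousOn_const.add h1)
      exact (continuousOn_id.inv₀ (fun x hx => ne_of_gt (lt_of_lt_of_le ha hx.1)))
    refine ContinuousOn.congr h2 ?_
    intro x hx
    rw [maxAvg_eq_F]
    have := Fprim_sub hloc hIntAll ha hx.1
    rw [show Fprim fstar x = Fprim fstar a + ∫ s in Ioc a x, fstar s by linarith [this]]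
  · rw [Icc_eq_empty (not_le.2 hab)]
    exact continuousOn_empty _

include hmono hloc hIntAll in
lemma negMaxAvg_hasDeriv {x : ℝ} (hx : 0 < x) :
    HasDerivWithinAt (fun s => -maxAvg fstar s)
      ((maxAvg fstar x - rreg fstar x) / x) (Ioi x) x := by
  have h1 : HasDerivWithinAt (fun s : ℝ => s⁻¹) (-(x^2)⁻¹) (Ioi x) x :=
    (hasDerivAt_inv (ne_of_gt hx)).hasDerivWithinAt
  have h2 := (h1.mul (Fprim_hasDeriv hmono hloc hIntAll hx)).neg
  have heq : (-((fun s : ℝ => s⁻¹) * Fprim fstar)) = fun s => -maxAvg fstar s := by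
    funext s; rw [maxAvg_eq_F]; rfl
  rw [heq] at h2
  refine h2.congr_deriv ?_
  rw [maxAvg_eq_F]
  field_simp
  ring

include hmono hloc hIntAll in
lemma key_interval {a b : ℝ} (ha : 0 < a) (hab : a ≤ b) :
    ∫ s in Ioc a b, (maxAvg fstar s - fstar s) / s
      = maxAvg fstar a - maxAvg fstar b := by
  have hb : 0 < b := lt_of_lt_of_le ha hab
  -- replace fstar by rreg on the integrand (a.e. equal)
  have hBc : {t : ℝ | 0 < t ∧ fstar t ≠ rreg fstar t}.Countable := rreg_bad_countable hmono
  have hB0 : volume {t : ℝ | 0 < t ∧ fstar t ≠ rreg fstar t} = 0 := hBc.measure_zero _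
  have hcongr : ∫ s in Ioc a b, (maxAvg fstar s - fstar s) / s
      = ∫ s in Ioc a b, (maxAvg fstar s - rreg fstar s) / s := by
    refine setIntegral_congr_ae measurableSet_Ioc ?_
    have : ∀ᵐ x : ℝ, x ∉ {t : ℝ | 0 < t ∧ fstar t ≠ rreg fstar t} :=
      (ae_iff).2 (by simpa using hB0)
    filter_upwards [this] with x hx hx'
    have hxpos : 0 < x := ha.trans_le hx'.1.le
    have : fstar x = rreg fstar x := by
      by_contra h
      exact hx ⟨hxpos, h⟩
    rw [this]
  -- interval integrability of the rreg integrand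
  have hintg : IntervalIntegrable (fun s => (maxAvg fstar s - rreg fstar s) / s) volume a b := by
    have h1 : IntervalIntegrable (rreg fstar) volume a b := by
      apply AntitoneOn.intervalIntegrable
      apply (rreg_anti hmono).mono
      rw [uIcc_of_le hab]
      exact fun x hx => lt_of_lt_of_le ha hx.1
    have h2 : IntervalIntegrable (maxAvg fstar) volume a b := by
      apply ContinuousOn.intervalIntegrable
      rw [uIcc_of_le hab]
      exact contOn_maxAvg hloc hIntAll ha
    have h3 := (h2.sub h1).mul_continuousOn (g := fun s => s⁻¹) ?_
    · simpa [div_eq_mul_inv] using h3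
    · rw [uIcc_of_le hab]
      exact continuousOn_id.inv₀ (fun x hx => ne_of_gt (lt_of_lt_of_le ha hx.1))
  -- FTC
  have hftc := intervalIntegral.integral_eq_sub_of_hasDeriv_right_of_le hab
    (f := fun s => -maxAvg fstar s)
    (f' := fun s => (maxAvg fstar s - rreg fstar s) / s)
    ((contOn_maxAvg hloc hIntAll ha).neg)
    (fun x hx => negMaxAvg_hasDeriv hmono hloc hIntAll (ha.trans hx.1))
    hintg
  rw [intervalIntegral.integral_of_le hab] at hftc
  rw [hcongr, hftc]
  ring

include hmono hIntAll in
lemma integrand_nonneg {t : ℝ} (ht : 0 < t) :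
    0 ≤ (maxAvg fstar t - fstar t) / t := by
  apply div_nonneg _ ht.le
  rw [sub_nonneg, maxAvg_eq_F]
  have hconst : ∫ _ in Ioo (0:ℝ) t, fstar t ∂volume = t * fstar t := by
    rw [setIntegral_const, Real.volume_real_Ioo, sub_zero, max_eq_left ht.le, smul_eq_mul]
  have hle : ∫ _ in Ioo (0:ℝ) t, fstar t ∂volume ≤ Fprim fstar t := by
    refine setIntegral_mono_on ?_ (hIntAll t ht) measurableSet_Ioo ?_
    · exact integrableOn_const (by simp only [Real.volume_Ioo]; exact ENNReal.ofReal_ne_top)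
    · exact fun x hx => hmono (mem_Ioi.2 hx.1) (mem_Ioi.2 ht) hx.2.le
  rw [hconst] at hle
  rw [show fstar t = t⁻¹ * (t * fstar t) by field_simp]
  exact mul_le_mul_of_nonneg_left hle (inv_nonneg.2 ht.le)

end G

section main
variable {fstar : ℝ → ℝ}
variable (hmono : AntitoneOn fstar (Ioi 0))
  (hloc : LocallyIntegrableOn fstar (Ioi 0) volume)
  (hIntAll : ∀ t : ℝ, 0 < t → IntegrableOn fstar (Ioo 0 t) volume)

include hmono hloc hIntAll in
lemma key_integrableOn {a b : ℝ} (ha : 0 < a) (hab : a ≤ b) :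
    IntegrableOn (fun s => (maxAvg fstar s - fstar s) / s) (Ioc a b) volume := by
  have hintg : IntervalIntegrable (fun s => (maxAvg fstar s - rreg fstar s) / s) volume a b := by
    have h1 : IntervalIntegrable (rreg fstar) volume a b := by
      apply AntitoneOn.intervalIntegrable
      apply (rreg_anti hmono).mono
      rw [uIcc_of_le hab]
      exact fun x hx => lt_of_lt_of_le ha hx.1
    have h2 : IntervalIntegrable (maxAvg fstar) volume a b := by
      apply ContinuousOn.intervalIntegrable
      rw [uIcc_of_le hab]
      exact contOn_maxAvg hloc hIntAll ha
    have h3 := (h2.sub h1).mul_continuousOn (g := fun s => s⁻¹) ?_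
    · simpa [div_eq_mul_inv] using h3
    · rw [uIcc_of_le hab]
      exact continuousOn_id.inv₀ (fun x hx => ne_of_gt (lt_of_lt_of_le ha hx.1))
  have h4 : IntegrableOn (fun s => (maxAvg fstar s - rreg fstar s) / s) (Ioc a b) volume :=
    (intervalIntegrable_iff_integrableOn_Ioc_of_le hab).1 hintg
  refine Integrable.congr h4 ?_
  have hB0 : volume {t : ℝ | 0 < t ∧ fstar t ≠ rreg fstar t} = 0 :=
    (rreg_bad_countable hmono).measure_zero _
  have hae : ∀ᵐ x : ℝ, x ∉ {t : ℝ | 0 < t ∧ fstar t ≠ rreg fstar t} :=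
    (ae_iff).2 (by simpa using hB0)
  filter_upwards [ae_restrict_mem measurableSet_Ioc, ae_restrict_of_ae hae] with x hx1 hx2
  rcases eq_or_ne (fstar x) (rreg fstar x) with h | h
  · rw [h]
  · exact absurd ⟨ha.trans hx1.1, h⟩ hx2

include hmono hloc in
theorem stmt2' (L : ℝ)
    (hnonneg : ∀ t ∈ Ioi (0:ℝ), 0 ≤ fstar t)
    (htop : Tendsto (maxAvg fstar) atTop (𝓝 0))
    (h0 : Tendsto (maxAvg fstar) (𝓝[>] (0:ℝ)) (𝓝 L)) :
    ∫ s in Ioi (0:ℝ), (maxAvg fstar s - fstar s) / s = L := by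
  by_cases hP : IntegrableOn fstar (Ioo 0 1) volume
  · have hIntAll : ∀ t : ℝ, 0 < t → IntegrableOn fstar (Ioo 0 t) volume := by
      intro t ht
      rcases le_total t 1 with h | h
      · exact hP.mono_set (Ioo_subset_Ioo le_rfl h)
      · have h2 : IntegrableOn fstar (Icc 1 t) volume :=
          hloc.integrableOn_compact_subset (fun x hx => lt_of_lt_of_le one_pos hx.1)
            isCompact_Icc
        refine (hP.union h2).mono_set ?_
        intro x hx
        rcases lt_or_ge x 1 with h' | h'
        · exact Or.inl ⟨hx.1, h'⟩
        · exact Or.inr ⟨h', hx.2.le⟩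
    set φ : ℕ → Set ℝ := fun n => Ioc ((n:ℝ)+1)⁻¹ ((n:ℝ)+1) with hφdef
    have hb : ∀ n : ℕ, (0:ℝ) < ((n:ℝ)+1)⁻¹ := fun n => by positivity
    have hone : ∀ n : ℕ, (1:ℝ) ≤ (n:ℝ)+1 := fun n => le_add_of_nonneg_left (Nat.cast_nonneg n)
    have hab : ∀ n : ℕ, ((n:ℝ)+1)⁻¹ ≤ (n:ℝ)+1 := fun n =>
      (inv_le_one_iff₀.2 (Or.inr (hone n))).trans (hone n)
    have hsub : ∀ n : ℕ, φ n ⊆ Ioi (0:ℝ) := fun n x hx => (hb n).trans hx.1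
    have t2 : Tendsto (fun n : ℕ => (n:ℝ)+1) atTop atTop :=
      tendsto_atTop_add_const_right atTop 1 tendsto_natCast_atTop_atTop
    have t1 : Tendsto (fun n : ℕ => ((n:ℝ)+1)⁻¹) atTop (𝓝 0) := t2.inv_tendsto_atTop
    have hta : Tendsto (fun n : ℕ => ((n:ℝ)+1)⁻¹) atTop (𝓝[>] 0) :=
      tendsto_nhdsWithin_of_tendsto_nhds_of_eventually_within _ t1
        (Eventually.of_forall (fun n => hb n))
    have hcover : AECover (volume.restrict (Ioi (0:ℝ))) atTop φ := by
      constructor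
      · filter_upwards [ae_restrict_mem measurableSet_Ioi] with x hx
        filter_upwards [t1.eventually_lt_const hx, t2.eventually_ge_atTop x] with n h1 h2
        exact ⟨h1, h2⟩
      · exact fun n => measurableSet_Ioc
    have hrr : ∀ n : ℕ, (volume.restrict (Ioi (0:ℝ))).restrict (φ n) = volume.restrict (φ n) := by
      intro n
      rw [Measure.restrict_restrict measurableSet_Ioc, inter_eq_self_of_subset_left (hsub n)]
    have hInt : ∀ n : ℕ, IntegrableOn (fun s => (maxAvg fstar s - fstar s)/s) (φ n)
        (volume.restrict (Ioi (0:ℝ))) := by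
      intro n
      rw [IntegrableOn, hrr n]
      exact key_integrableOn hmono hloc hIntAll (hb n) (hab n)
    have hnng : 0 ≤ᵐ[volume.restrict (Ioi (0:ℝ))] fun s => (maxAvg fstar s - fstar s)/s :=
      (ae_restrict_mem measurableSet_Ioi).mono
        (fun x hx => integrand_nonneg hmono hIntAll hx)
    have htend : Tendsto (fun n => ∫ x in φ n, (maxAvg fstar x - fstar x)/x
        ∂(volume.restrict (Ioi (0:ℝ)))) atTop (𝓝 L) := by
      have heq : ∀ n : ℕ, ∫ x in φ n, (maxAvg fstar x - fstar x)/x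
          ∂(volume.restrict (Ioi (0:ℝ)))
          = maxAvg fstar (((n:ℝ)+1)⁻¹) - maxAvg fstar ((n:ℝ)+1) := by
        intro n
        rw [show (∫ x in φ n, (maxAvg fstar x - fstar x)/x ∂(volume.restrict (Ioi (0:ℝ))))
            = ∫ x in φ n, (maxAvg fstar x - fstar x)/x ∂volume by rw [← hrr n]]
        exact key_interval hmono hloc hIntAll (hb n) (hab n)
      rw [tendsto_congr heq]
      have h := (h0.comp hta).sub (htop.comp t2)
      simpa using h
    exact hcover.integral_eq_of_tendsto_of_nonneg_ae L hnng hInt htend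
  · have hnone : ∀ t : ℝ, 0 < t → ¬ IntegrableOn fstar (Ioo 0 t) volume := by
      intro t ht hint
      rcases le_total 1 t with h | h
      · exact hP (hint.mono_set (Ioo_subset_Ioo le_rfl h))
      · have h2 : IntegrableOn fstar (Icc t 1) volume :=
          hloc.integrableOn_compact_subset (fun x hx => lt_of_lt_of_le ht hx.1) isCompact_Icc
        apply hP
        refine (hint.union h2).mono_set ?_
        intro x hx
        rcases lt_or_ge x t with h' | h'
        · exact Or.inl ⟨hx.1, h'⟩
        · exact Or.inr ⟨h', hx.2.le⟩
    have hmz : ∀ t : ℝ, 0 < t → maxAvg fstar t = 0 := by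
      intro t ht
      rw [maxAvg, integral_undef (hnone t ht), mul_zero]
    have hL : L = 0 := by
      refine tendsto_nhds_unique h0 ?_
      refine Tendsto.congr' ?_ (tendsto_const_nhds (x := (0:ℝ)))
      filter_upwards [self_mem_nhdsWithin] with x hx
      exact (hmz x hx).symm
    rw [hL]
    apply integral_undef
    intro hI
    apply hnone 1 one_pos
    have hI' : IntegrableOn (fun s => (maxAvg fstar s - fstar s)/s) (Ioi 0) volume := hI
    have hI2 : IntegrableOn (fun s => (maxAvg fstar s - fstar s)/s) (Ioo 0 1) volume :=
      hI'.mono_set (fun x hx => hx.1)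
    have heq : EqOn (fun s => (maxAvg fstar s - fstar s)/s) (fun s => -(fstar s / s))
        (Ioo (0:ℝ) 1) := by
      intro x hx
      simp only
      rw [hmz x hx.1]
      ring
    have hI3 : IntegrableOn (fun s => fstar s / s) (Ioo 0 1) volume := by
      have h5 : IntegrableOn (fun s => -(fstar s / s)) (Ioo 0 1) volume :=
        hI2.congr_fun heq measurableSet_Ioo
      refine h5.neg.congr (Eventually.of_forall fun x => ?_)
      simp
    have hmeas : AEStronglyMeasurable fstar (volume.restrict (Ioo (0:ℝ) 1)) :=
      hloc.aestronglyMeasurable.mono_measure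
        (Measure.restrict_mono (fun x hx => hx.1) le_rfl)
    refine Integrable.mono hI3 hmeas ?_
    filter_upwards [ae_restrict_mem measurableSet_Ioo] with x hx
    have hx0 : (0:ℝ) < x := hx.1
    have hfx : 0 ≤ fstar x := hnonneg x hx.1
    rw [Real.norm_eq_abs, Real.norm_eq_abs, abs_of_nonneg hfx,
      abs_of_nonneg (div_nonneg hfx hx0.le)]
    rw [le_div_iff₀ hx0]
    nlinarith [hx.2]

end main

/-- If `f** (t) → 0` as `t → ∞` and `f**(t) → L = ‖f‖_∞` as `t → 0⁺`, then
`∫₀^∞ (f**(s) - f*(s)) ds/s = ‖f‖_∞`, i.e. the `L(∞,1)` quasinorm equals the sup norm. -/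
theorem stmt2 (fstar : ℝ → ℝ) (L : ℝ)
    (hmono : AntitoneOn fstar (Ioi 0))
    (hnonneg : ∀ t ∈ Ioi (0:ℝ), 0 ≤ fstar t)
    (hloc : LocallyIntegrableOn fstar (Ioi 0) volume)
    (htop : Tendsto (maxAvg fstar) atTop (𝓝 0))
    (h0 : Tendsto (maxAvg fstar) (𝓝[>] (0:ℝ)) (𝓝 L)) :
    ∫ s in Ioi (0:ℝ), (maxAvg fstar s - fstar s) / s = L :=
  stmt2' hmono hloc L hnonneg htop h0
end

section
/- Let n > 1 and suppose the pointwise symmetrization inequality f**(t) - f*(t) ≤ c t^{1/n} (∇f)**(t) holds for all t > 0. Then for 1 < p < n, 1 ≤ q < ∞, and 1/p̄ = 1/p - 1/n, one has (∫₀^∞ [f**(t) t^{1/p̄}]^q dt/t)^{1/q} ≤ C (∫₀^∞ [(∇f)*(t) t^{1/p}]^q dt/t)^{1/q}, i.e. ‖f‖_{L(p̄,q)} ≲ ‖∇f‖_{L(p,q)}. -/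
open MeasureTheory Set Filter Topology
open scoped ENNReal

lemma exists_measurable_ext {f : ℝ → ℝ} (hf : AntitoneOn f (Ioi 0)) :
    ∃ g : ℝ → ℝ, Measurable g ∧ ∀ t, 0 < t → g t = f t := by
  refine ⟨fun t => if 0 < t then f t else 0, ?_, fun t ht => if_pos ht⟩
  have hk : ∀ k : ℕ, Measurable (fun t : ℝ => if ((k:ℝ)+1)⁻¹ < t then f t else 0) := by
    intro k
    have hε : (0:ℝ) < ((k:ℝ)+1)⁻¹ := by positivity
    have hanti : Antitone (fun t : ℝ => f (max t (((k:ℝ)+1)⁻¹))) := by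
      intro a b hab
      exact hf (mem_Ioi.mpr (lt_of_lt_of_le hε (le_max_right _ _)))
        (mem_Ioi.mpr (lt_of_lt_of_le hε (le_max_right _ _))) (max_le_max hab le_rfl)
    have heq : (fun t : ℝ => if ((k:ℝ)+1)⁻¹ < t then f t else 0)
        = (Ioi (((k:ℝ)+1)⁻¹)).indicator (fun t => f (max t (((k:ℝ)+1)⁻¹))) := by
      funext t
      by_cases h : ((k:ℝ)+1)⁻¹ < t
      · simp [indicator, h, max_eq_left h.le]
      · simp [indicator, h]
    rw [heq]
    exact hanti.measurable.indicator measurableSet_Ioi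
  apply measurable_of_tendsto_metrizable hk
  rw [tendsto_pi_nhds]
  intro t
  rcases le_or_gt t 0 with h | h
  · have he : ∀ k : ℕ, (if ((k:ℝ)+1)⁻¹ < t then f t else 0) = 0 := by
      intro k
      have hnot : ¬ ((k:ℝ)+1)⁻¹ < t :=
        not_lt.mpr (h.trans (by positivity : (0:ℝ) ≤ ((k:ℝ)+1)⁻¹))
      simp [hnot]
    simp only [he, not_lt.mpr h, if_neg, if_false]
    exact tendsto_const_nhds
  · have : ∀ᶠ k : ℕ in atTop, (if ((k:ℝ)+1)⁻¹ < t then f t else 0) = f t := by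
      obtain ⟨K, hK⟩ := exists_nat_gt t⁻¹
      filter_upwards [eventually_ge_atTop K] with k hk
      have : ((k:ℝ)+1)⁻¹ < t := by
        rw [inv_lt_comm₀ (by positivity) h]
        calc t⁻¹ < K := hK
        _ ≤ (k:ℝ) := by exact_mod_cast hk
        _ < (k:ℝ)+1 := by linarith
      simp [this]
    rw [if_pos h]
    exact Tendsto.congr' (this.mono fun k hk => hk.symm) tendsto_const_nhds

lemma my_iSup_rpow (x : ℕ → ℝ≥0∞) {q : ℝ} (hq : 0 < q) :
    (⨆ n, x n) ^ q = ⨆ n, (x n) ^ q := by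
  apply le_antisymm
  · set y := ⨆ n, (x n) ^ q with hy
    have h1 : ∀ n, x n ≤ y ^ (1/q) := by
      intro n
      have : x n = ((x n) ^ q) ^ (1/q) := by
        rw [← ENNReal.rpow_mul, mul_one_div, div_self hq.ne', ENNReal.rpow_one]
      rw [this]
      exact ENNReal.rpow_le_rpow (le_iSup (fun n => (x n)^q) n) (by positivity)
    calc (⨆ n, x n) ^ q ≤ (y ^ (1/q)) ^ q :=
          ENNReal.rpow_le_rpow (iSup_le h1) hq.le
      _ = y := by rw [← ENNReal.rpow_mul, one_div_mul_cancel hq.ne', ENNReal.rpow_one]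
  · exact iSup_le fun n => ENNReal.rpow_le_rpow (le_iSup x n) hq.le

lemma my_minkowski {μ : Measure ℝ} {q : ℝ} (hq : 1 ≤ q) (h : ℕ → ℝ → ℝ≥0∞)
    (hm : ∀ i, Measurable (h i)) :
    (∫⁻ a, (∑' i, h i a) ^ q ∂μ) ^ (1/q) ≤ ∑' i, (∫⁻ a, (h i a) ^ q ∂μ) ^ (1/q) := by
  have hq0 : 0 < q := lt_of_lt_of_le one_pos hq
  set S : ℕ → ℝ → ℝ≥0∞ := fun N a => ∑ i ∈ Finset.range N, h i a with hS
  have hSm : ∀ N, Measurable (S N) := fun N => Finset.measurable_sum _ (fun i _ => hm i)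
  set B := ∑' i, (∫⁻ a, (h i a) ^ q ∂μ) ^ (1/q) with hB
  have hfin : ∀ N, (∫⁻ a, (S N a) ^ q ∂μ) ^ (1/q) ≤ B := by
    intro N
    have : (∫⁻ a, (S N a) ^ q ∂μ) ^ (1/q)
        ≤ ∑ i ∈ Finset.range N, (∫⁻ a, (h i a) ^ q ∂μ) ^ (1/q) := by
      induction N with
      | zero =>
        simp only [hS, Finset.range_zero, Finset.sum_empty]
        rw [show (fun (a : ℝ) => (0:ℝ≥0∞) ^ q) = fun _ => 0 from funext fun _ => ENNReal.zero_rpow_of_pos hq0]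
        simp only [lintegral_const, MeasureTheory.lintegral_zero, zero_mul]
        rw [ENNReal.zero_rpow_of_pos (by positivity : (0:ℝ) < 1/q)]
      | succ N ih =>
        have hsplit : S (N+1) = fun a => S N a + h N a := by
          funext a; simp [hS, Finset.sum_range_succ]
        rw [hsplit, Finset.sum_range_succ]
        calc (∫⁻ a, (S N a + h N a) ^ q ∂μ) ^ (1/q)
            ≤ (∫⁻ a, (S N a) ^ q ∂μ) ^ (1/q) + (∫⁻ a, (h N a) ^ q ∂μ) ^ (1/q) :=
              ENNReal.lintegral_Lp_add_le (hSm N).aemeasurable (hm N).aemeasurable hq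
          _ ≤ _ := add_le_add ih le_rfl
    exact this.trans (ENNReal.sum_le_tsum _)
  have key : ∫⁻ a, (∑' i, h i a) ^ q ∂μ = ⨆ N, ∫⁻ a, (S N a) ^ q ∂μ := by
    have h1 : (fun a => (∑' i, h i a) ^ q) = fun a => ⨆ N, (S N a) ^ q := by
      funext a
      rw [ENNReal.tsum_eq_iSup_nat, my_iSup_rpow _ hq0]
    rw [h1]
    apply lintegral_iSup
    · exact fun N => ENNReal.continuous_rpow_const.measurable.comp (hSm N)
    · intro N M hNM a
      exact ENNReal.rpow_le_rpow
        (Finset.sum_le_sum_of_subset (Finset.range_subset_range.mpr hNM)) hq0.le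
  rw [key]
  have h2 : ∀ N, ∫⁻ a, (S N a) ^ q ∂μ ≤ B ^ q := by
    intro N
    have := ENNReal.rpow_le_rpow (hfin N) hq0.le
    rwa [← ENNReal.rpow_mul, one_div_mul_cancel hq0.ne', ENNReal.rpow_one] at this
  calc (⨆ N, ∫⁻ a, (S N a) ^ q ∂μ) ^ (1/q) ≤ (B ^ q) ^ (1/q) :=
        ENNReal.rpow_le_rpow (iSup_le h2) (by positivity)
    _ = B := by rw [← ENNReal.rpow_mul, mul_one_div, div_self hq0.ne', ENNReal.rpow_one]

lemma my_scale (φ : ℝ → ℝ≥0∞) (hφ : Measurable φ) {a : ℝ} (ha : 0 < a) :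
    ∫⁻ t in Ioi (0:ℝ), φ (a*t) * ENNReal.ofReal t⁻¹
      = ∫⁻ u in Ioi (0:ℝ), φ u * ENNReal.ofReal u⁻¹ := by
  set Ψ : ℝ → ℝ≥0∞ := fun u => φ u * ENNReal.ofReal u⁻¹ with hΨ
  have hΨm : Measurable Ψ := hφ.mul (ENNReal.measurable_ofReal.comp measurable_inv)
  set Ψ' : ℝ → ℝ≥0∞ := (Ioi (0:ℝ)).indicator Ψ with hΨ'
  have hΨ'm : Measurable Ψ' := hΨm.indicator measurableSet_Ioi
  have e1 : ∫⁻ t in Ioi (0:ℝ), Ψ (a*t) ∂volume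
      = ENNReal.ofReal a⁻¹ * ∫⁻ t in Ioi (0:ℝ), φ (a*t) * ENNReal.ofReal t⁻¹ := by
    rw [← lintegral_const_mul' _ _ ENNReal.ofReal_ne_top]
    apply setLIntegral_congr_fun_ae measurableSet_Ioi
    filter_upwards with t ht
    rw [hΨ]
    simp only
    rw [mul_inv, ENNReal.ofReal_mul (by positivity), mul_comm (φ (a*t)), mul_assoc]
    ring
  have e2 : ∫⁻ t in Ioi (0:ℝ), Ψ (a*t) ∂volume = ∫⁻ t, Ψ' (a*t) ∂volume := by
    rw [← lintegral_indicator measurableSet_Ioi]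
    congr 1
    funext t
    rcases lt_or_ge 0 t with h | h
    · rw [indicator_of_mem (mem_Ioi.mpr h), hΨ', indicator_of_mem (mem_Ioi.mpr (by positivity))]
    · rw [indicator_of_notMem (by simpa using h), hΨ',
        indicator_of_notMem (by simp; nlinarith)]
  have e3 : ∫⁻ t, Ψ' (a*t) ∂volume = ENNReal.ofReal a⁻¹ * ∫⁻ x, Ψ' x ∂volume := by
    have := lintegral_map (μ := (volume : Measure ℝ)) hΨ'm (measurable_const_mul (a : ℝ))
    rw [Real.map_volume_mul_left ha.ne'] at this
    rw [← this, lintegral_smul_measure, abs_of_pos (by positivity), smul_eq_mul]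
  have e4 : ∫⁻ x, Ψ' x ∂volume = ∫⁻ u in Ioi (0:ℝ), Ψ u ∂volume := by
    rw [hΨ', lintegral_indicator measurableSet_Ioi]
  have : ENNReal.ofReal a⁻¹ * ∫⁻ t in Ioi (0:ℝ), φ (a*t) * ENNReal.ofReal t⁻¹
      = ENNReal.ofReal a⁻¹ * ∫⁻ u in Ioi (0:ℝ), φ u * ENNReal.ofReal u⁻¹ := by
    rw [← e1, e2, e3, e4]
  exact (ENNReal.mul_right_inj (by simp [ha]) ENNReal.ofReal_ne_top).mp this

lemma my_stepA {fstar gstar : ℝ → ℝ} {c : ℝ} {n : ℕ}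
    (hfmono : AntitoneOn fstar (Ioi 0))
    (hloc : ∀ T : ℝ, 0 < T → IntegrableOn fstar (Ioo 0 T) volume)
    (hpt : ∀ t ∈ Ioi (0:ℝ), maxAvg fstar t - fstar t ≤ c * t ^ (1/(n:ℝ)) * maxAvg gstar t)
    {t : ℝ} (ht : 0 < t) :
    maxAvg fstar t ≤ maxAvg fstar (2*t) + c * (2*t)^(1/(n:ℝ)) * maxAvg gstar (2*t) := by
  have h2t : 0 < 2*t := by linarith
  have hint1 : IntegrableOn fstar (Ioo 0 t) volume := hloc _ ht
  have hintI : IntegrableOn fstar (Ico t (2*t)) volume := by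
    refine (hloc (3*t) (by linarith)).mono_set ?_
    intro x hx
    exact ⟨lt_of_lt_of_le ht hx.1, by rcases hx with ⟨h1, h2⟩; linarith⟩
  have hU : Ioo (0:ℝ) (2*t) = Ioo 0 t ∪ Ico t (2*t) := by
    ext x
    simp only [mem_Ioo, mem_Ico, mem_union]
    constructor
    · rintro ⟨h1, h2⟩
      rcases lt_or_ge x t with h | h
      · exact Or.inl ⟨h1, h⟩
      · exact Or.inr ⟨h, h2⟩
    · rintro (⟨h1, h2⟩ | ⟨h1, h2⟩)
      · exact ⟨h1, by linarith⟩
      · exact ⟨by linarith, h2⟩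
  have hdisj : Disjoint (Ioo (0:ℝ) t) (Ico t (2*t)) := by
    rw [Set.disjoint_left]
    rintro x ⟨_, hx2⟩ ⟨hx3, _⟩
    exact absurd hx3 (not_le.mpr hx2)
  have hsplit : ∫ s in Ioo (0:ℝ) (2*t), fstar s
      = (∫ s in Ioo (0:ℝ) t, fstar s) + ∫ s in Ico t (2*t), fstar s := by
    rw [hU]
    exact setIntegral_union hdisj measurableSet_Ico hint1 hintI
  have hlow : t * fstar (2*t) ≤ ∫ s in Ico t (2*t), fstar s := by
    have hconst : ∫ _ in Ico t (2*t), fstar (2*t) ∂volume = t * fstar (2*t) := by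
      rw [setIntegral_const, Real.volume_real_Ico_of_le (by linarith)]
      simp only [smul_eq_mul]
      ring
    rw [← hconst]
    apply setIntegral_mono_on (integrableOn_const measure_Ico_lt_top.ne) hintI
      measurableSet_Ico
    intro s hs
    exact hfmono (mem_Ioi.mpr (lt_of_lt_of_le ht hs.1)) (mem_Ioi.mpr h2t) hs.2.le
  have key : (∫ s in Ioo (0:ℝ) t, fstar s)
      ≤ (∫ s in Ioo (0:ℝ) (2*t), fstar s) - t * fstar (2*t) := by linarith
  have h1 : (1/t) * (∫ s in Ioo (0:ℝ) t, fstar s)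
      ≤ (1/t) * ((∫ s in Ioo (0:ℝ) (2*t), fstar s) - t * fstar (2*t)) :=
    mul_le_mul_of_nonneg_left key (by positivity)
  have h2 : (1/t) * ((∫ s in Ioo (0:ℝ) (2*t), fstar s) - t * fstar (2*t))
      = 2 * ((1/(2*t)) * (∫ s in Ioo (0:ℝ) (2*t), fstar s)) - fstar (2*t) := by
    field_simp
  have h3 := hpt (2*t) (mem_Ioi.mpr h2t)
  simp only [maxAvg] at *
  linarith

lemma my_stepB {fstar gstar : ℝ → ℝ} {c : ℝ} {n : ℕ} (hc : 0 ≤ c)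
    (hfmono : AntitoneOn fstar (Ioi 0))
    (hgnn : ∀ t ∈ Ioi (0:ℝ), 0 ≤ gstar t)
    (hloc : ∀ T : ℝ, 0 < T → IntegrableOn fstar (Ioo 0 T) volume)
    (hpt : ∀ t ∈ Ioi (0:ℝ), maxAvg fstar t - fstar t ≤ c * t ^ (1/(n:ℝ)) * maxAvg gstar t)
    (htop : Tendsto (maxAvg fstar) atTop (𝓝 0))
    {t : ℝ} (ht : 0 < t) :
    ENNReal.ofReal (maxAvg fstar t)
      ≤ ∑' j : ℕ, ENNReal.ofReal
          (c * ((2:ℝ)^(j+1) * t)^(1/(n:ℝ)) * maxAvg gstar ((2:ℝ)^(j+1)*t)) := by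
  have Gnn : ∀ u : ℝ, 0 < u → 0 ≤ maxAvg gstar u := by
    intro u hu
    exact mul_nonneg (by positivity)
      (setIntegral_nonneg measurableSet_Ioo (fun x hx => hgnn x hx.1))
  set term : ℕ → ℝ := fun j => c * ((2:ℝ)^(j+1) * t)^(1/(n:ℝ)) * maxAvg gstar ((2:ℝ)^(j+1)*t)
    with hterm
  have htermnn : ∀ j, 0 ≤ term j := by
    intro j
    exact mul_nonneg (mul_nonneg hc (Real.rpow_nonneg (by positivity) _))
      (Gnn _ (by positivity))
  have hiter : ∀ N : ℕ, maxAvg fstar t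
      ≤ maxAvg fstar ((2:ℝ)^N * t) + ∑ j ∈ Finset.range N, term j := by
    intro N
    induction N with
    | zero => simp
    | succ N ih =>
      have hA := my_stepA hfmono hloc hpt (t := (2:ℝ)^N * t) (by positivity)
      have he : 2 * ((2:ℝ)^N * t) = (2:ℝ)^(N+1) * t := by ring
      rw [he] at hA
      rw [Finset.sum_range_succ]
      have : term N = c * ((2:ℝ)^(N+1) * t)^(1/(n:ℝ)) * maxAvg gstar ((2:ℝ)^(N+1)*t) := rfl
      linarith
  have hN : ∀ N : ℕ, ENNReal.ofReal (maxAvg fstar t)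
      ≤ ENNReal.ofReal (maxAvg fstar ((2:ℝ)^N * t)) + ∑' j, ENNReal.ofReal (term j) := by
    intro N
    calc ENNReal.ofReal (maxAvg fstar t)
        ≤ ENNReal.ofReal (maxAvg fstar ((2:ℝ)^N * t) + ∑ j ∈ Finset.range N, term j) :=
          ENNReal.ofReal_le_ofReal (hiter N)
      _ ≤ ENNReal.ofReal (maxAvg fstar ((2:ℝ)^N * t))
            + ENNReal.ofReal (∑ j ∈ Finset.range N, term j) := ENNReal.ofReal_add_le
      _ = ENNReal.ofReal (maxAvg fstar ((2:ℝ)^N * t))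
            + ∑ j ∈ Finset.range N, ENNReal.ofReal (term j) := by
          rw [ENNReal.ofReal_sum_of_nonneg (fun j _ => htermnn j)]
      _ ≤ _ := add_le_add le_rfl (ENNReal.sum_le_tsum _)
  have hTT : Tendsto (fun N : ℕ => (2:ℝ)^N * t) atTop atTop :=
    Tendsto.atTop_mul_const ht (tendsto_pow_atTop_atTop_of_one_lt one_lt_two)
  have h0 : Tendsto (fun N : ℕ => ENNReal.ofReal (maxAvg fstar ((2:ℝ)^N * t))) atTop (𝓝 0) := by
    have h1 := htop.comp hTT
    have h2 := (ENNReal.continuous_ofReal.tendsto 0).comp h1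
    rw [ENNReal.ofReal_zero] at h2
    exact h2
  have hlim : Tendsto (fun N : ℕ => ENNReal.ofReal (maxAvg fstar ((2:ℝ)^N * t))
      + ∑' j, ENNReal.ofReal (term j)) atTop (𝓝 (0 + ∑' j, ENNReal.ofReal (term j))) :=
    h0.add tendsto_const_nhds
  rw [zero_add] at hlim
  exact ge_of_tendsto' hlim hN

lemma my_stepC {gstar : ℝ → ℝ}
    (hgmono : AntitoneOn gstar (Ioi 0))
    (hgnn : ∀ t ∈ Ioi (0:ℝ), 0 ≤ gstar t)
    {u : ℝ} (hu : 0 < u) :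
    ENNReal.ofReal (maxAvg gstar u)
      ≤ ∑' i : ℕ, ENNReal.ofReal (((2:ℝ)^(i+1))⁻¹ * gstar (((2:ℝ)^(i+1))⁻¹ * u)) := by
  by_cases hgi : IntegrableOn gstar (Ioo 0 u) volume
  swap
  · have : maxAvg gstar u = 0 := by
      simp only [maxAvg, integral_undef hgi, mul_zero]
    rw [this, ENNReal.ofReal_zero]
    exact zero_le
  · set gterm : ℕ → ℝ := fun i => ((2:ℝ)^(i+1))⁻¹ * u * gstar (((2:ℝ)^(i+1))⁻¹ * u) with hgterm
    have hgtermnn : ∀ i, 0 ≤ gterm i := by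
      intro i
      exact mul_nonneg (by positivity) (hgnn _ (mem_Ioi.mpr (by positivity)))
    set S : ℕ → Set ℝ := fun N => Ico (((2:ℝ)^N)⁻¹ * u) u with hSdef
    have hms : ∀ N, MeasurableSet (S N) := fun N => measurableSet_Ico
    have hmono : Monotone S := by
      intro N M hNM
      apply Ico_subset_Ico_left
      apply mul_le_mul_of_nonneg_right _ hu.le
      apply inv_anti₀ (by positivity)
      exact pow_le_pow_right₀ one_le_two hNM
    have hsub : ∀ N, S N ⊆ Ioo 0 u := by
      intro N x hx
      exact ⟨lt_of_lt_of_le (by positivity) hx.1, hx.2⟩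
    have hunion : ⋃ N, S N = Ioo 0 u := by
      apply Subset.antisymm
      · exact iUnion_subset hsub
      · intro x hx
        obtain ⟨N, hN⟩ := pow_unbounded_of_one_lt (u / x) (one_lt_two (α := ℝ))
        refine mem_iUnion.mpr ⟨N, ?_, hx.2⟩
        rw [inv_mul_le_iff₀ (by positivity)]
        calc u = (u / x) * x := (div_mul_cancel₀ u hx.1.ne').symm
          _ ≤ 2^N * x := by
            apply mul_le_mul_of_nonneg_right hN.le hx.1.le
    have hA : ∀ N : ℕ, (∫ s in S N, gstar s) ≤ ∑ i ∈ Finset.range N, gterm i := by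
      intro N
      induction N with
      | zero => simp [hSdef]
      | succ N ih =>
        set a := ((2:ℝ)^(N+1))⁻¹ * u with ha
        set b := ((2:ℝ)^N)⁻¹ * u with hb
        have ha0 : 0 < a := by positivity
        have hab : a < b := by
          rw [ha, hb]
          apply mul_lt_mul_of_pos_right _ hu
          apply inv_strictAnti₀ (by positivity)
          exact pow_lt_pow_right₀ one_lt_two (by omega)
        have hbu : b ≤ u := by
          rw [hb]
          calc ((2:ℝ)^N)⁻¹ * u ≤ 1 * u := by
                apply mul_le_mul_of_nonneg_right _ hu.le
                exact inv_le_one_of_one_le₀ (one_le_pow₀ one_le_two)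
            _ = u := one_mul u
        have hUU : S (N+1) = Ico a b ∪ S N := by
          rw [hSdef]
          simp only
          rw [← ha, ← hb]
          ext x
          simp only [mem_Ico, mem_union]
          constructor
          · rintro ⟨h1, h2⟩
            rcases lt_or_ge x b with h | h
            · exact Or.inl ⟨h1, h⟩
            · exact Or.inr ⟨h, h2⟩
          · rintro (⟨h1, h2⟩ | ⟨h1, h2⟩)
            · exact ⟨h1, lt_of_lt_of_le h2 hbu⟩
            · exact ⟨le_trans hab.le h1, h2⟩
        have hdisj : Disjoint (Ico a b) (S N) := by
          rw [Set.disjoint_left]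
          rintro x ⟨_, hx2⟩ ⟨hx3, _⟩
          exact absurd hx3 (not_le.mpr hx2)
        have hint1 : IntegrableOn gstar (Ico a b) volume :=
          hgi.mono_set (fun x hx => ⟨lt_of_lt_of_le ha0 hx.1, lt_of_lt_of_le hx.2 hbu⟩)
        have hint2 : IntegrableOn gstar (S N) volume := hgi.mono_set (hsub N)
        have hsplit : ∫ s in S (N+1), gstar s
            = (∫ s in Ico a b, gstar s) + ∫ s in S N, gstar s := by
          rw [hUU]
          exact setIntegral_union hdisj (hms N) hint1 hint2
        have hup : (∫ s in Ico a b, gstar s) ≤ gterm N := by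
          have hconst : ∫ _ in Ico a b, gstar a ∂volume = (b - a) * gstar a := by
            rw [setIntegral_const, Real.volume_real_Ico_of_le (by linarith), smul_eq_mul]
          have h1 : (∫ s in Ico a b, gstar s) ≤ (b - a) * gstar a := by
            rw [← hconst]
            apply setIntegral_mono_on hint1
              (integrableOn_const measure_Ico_lt_top.ne) measurableSet_Ico
            intro s hs
            exact hgmono (mem_Ioi.mpr ha0) (mem_Ioi.mpr (lt_of_lt_of_le ha0 hs.1)) hs.1
          have hba : b - a = ((2:ℝ)^(N+1))⁻¹ * u := by
            rw [ha, hb]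
            have : ((2:ℝ)^N)⁻¹ = 2 * ((2:ℝ)^(N+1))⁻¹ := by
              rw [pow_succ]
              field_simp
            rw [this]
            ring
          rw [hba] at h1
          exact h1
        rw [hsplit, Finset.sum_range_succ]
        linarith
    have hlim : Tendsto (fun N => ∫ s in S N, gstar s) atTop
        (𝓝 (∫ s in Ioo (0:ℝ) u, gstar s)) := by
      have := tendsto_setIntegral_of_monotone hms hmono (by rw [hunion]; exact hgi)
      rwa [hunion] at this
    have hkey : ENNReal.ofReal (∫ s in Ioo (0:ℝ) u, gstar s)
        ≤ ∑' i, ENNReal.ofReal (gterm i) := by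
      apply le_of_tendsto ((ENNReal.continuous_ofReal.tendsto _).comp hlim)
      filter_upwards with N
      calc ENNReal.ofReal (∫ s in S N, gstar s)
          ≤ ENNReal.ofReal (∑ i ∈ Finset.range N, gterm i) :=
            ENNReal.ofReal_le_ofReal (hA N)
        _ = ∑ i ∈ Finset.range N, ENNReal.ofReal (gterm i) :=
            ENNReal.ofReal_sum_of_nonneg (fun i _ => hgtermnn i)
        _ ≤ _ := ENNReal.sum_le_tsum _
    calc ENNReal.ofReal (maxAvg gstar u)
        = ENNReal.ofReal (1/u) * ENNReal.ofReal (∫ s in Ioo (0:ℝ) u, gstar s) := by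
          rw [← ENNReal.ofReal_mul (by positivity)]
          rfl
      _ ≤ ENNReal.ofReal (1/u) * ∑' i, ENNReal.ofReal (gterm i) := mul_le_mul_right hkey _
      _ = ∑' i, ENNReal.ofReal (1/u) * ENNReal.ofReal (gterm i) := ENNReal.tsum_mul_left.symm
      _ = ∑' i, ENNReal.ofReal (((2:ℝ)^(i+1))⁻¹ * gstar (((2:ℝ)^(i+1))⁻¹ * u)) := by
          apply tsum_congr
          intro i
          rw [← ENNReal.ofReal_mul (by positivity)]
          congr 1
          rw [hgterm]
          field_simp

/-- First-order Lorentz–Sobolev inequality `‖f‖_{L(p̄,q)} ≲ ‖∇f‖_{L(p,q)}`, `1 < p < n`,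
`1 ≤ q < ∞`, `1/p̄ = 1/p - 1/n`, deduced from the pointwise symmetrization inequality
`f**(t) - f*(t) ≤ c t^{1/n} (∇f)**(t)`. -/
theorem stmt5 (n : ℕ) (hn : 1 < n) (fstar gstar : ℝ → ℝ) (c : ℝ) (hc : 0 ≤ c)
    (hfmono : AntitoneOn fstar (Ioi 0)) (hfnn : ∀ t ∈ Ioi (0:ℝ), 0 ≤ fstar t)
    (hgmono : AntitoneOn gstar (Ioi 0)) (hgnn : ∀ t ∈ Ioi (0:ℝ), 0 ≤ gstar t)
    (htop : Tendsto (maxAvg fstar) atTop (𝓝 0))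
    (hpt : ∀ t ∈ Ioi (0:ℝ),
      maxAvg fstar t - fstar t ≤ c * t ^ (1/(n:ℝ)) * maxAvg gstar t)
    (p q pbar : ℝ) (hp : 1 < p) (hpn : p < n) (hq : 1 ≤ q)
    (hpbar : 1/pbar = 1/p - 1/(n:ℝ)) :
    ∃ C : ℝ≥0∞, C ≠ ⊤ ∧
      (∫⁻ t in Ioi (0:ℝ),
          ENNReal.ofReal ((maxAvg fstar t * t ^ (1/pbar)) ^ q / t)) ^ (1/q)
        ≤ C * (∫⁻ t in Ioi (0:ℝ),
            ENNReal.ofReal ((gstar t * t ^ (1/p)) ^ q / t)) ^ (1/q) := by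
  have hq0 : 0 < q := lt_of_lt_of_le one_pos hq
  by_cases hfi : IntegrableOn fstar (Ioo 0 1) volume
  swap
  · -- fstar is not locally integrable near 0: maxAvg fstar ≡ 0
    refine ⟨1, ENNReal.one_ne_top, ?_⟩
    have hnone : ∀ t : ℝ, 0 < t → ¬ IntegrableOn fstar (Ioo 0 t) volume := by
      intro t ht hint
      apply hfi
      rcases le_or_gt 1 t with h | h
      · exact hint.mono_set (Ioo_subset_Ioo le_rfl h)
      · have hmeas : AEMeasurable fstar (volume.restrict (Ico t 1)) :=
          aemeasurable_restrict_of_antitoneOn measurableSet_Ico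
            (hfmono.mono (fun x hx => mem_Ioi.mpr (lt_of_lt_of_le ht hx.1)))
        have hb : IntegrableOn fstar (Ico t 1) volume := by
          apply Integrable.mono' (g := fun _ => fstar t)
            (integrableOn_const measure_Ico_lt_top.ne)
            hmeas.aestronglyMeasurable
          filter_upwards [ae_restrict_mem measurableSet_Ico] with s hs
          rw [Real.norm_eq_abs, abs_of_nonneg (hfnn s (mem_Ioi.mpr (lt_of_lt_of_le ht hs.1)))]
          exact hfmono (mem_Ioi.mpr ht) (mem_Ioi.mpr (lt_of_lt_of_le ht hs.1)) hs.1
        refine (hint.union hb).mono_set ?_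
        intro x hx
        rcases lt_or_ge x t with hxt | hxt
        · exact Or.inl ⟨hx.1, hxt⟩
        · exact Or.inr ⟨hxt, hx.2⟩
    have hzero : ∫⁻ t in Ioi (0:ℝ),
        ENNReal.ofReal ((maxAvg fstar t * t ^ (1/pbar)) ^ q / t) = 0 := by
      rw [← lintegral_zero (μ := volume.restrict (Ioi (0:ℝ)))]
      apply setLIntegral_congr_fun_ae measurableSet_Ioi
      filter_upwards with t ht
      have h1 : maxAvg fstar t = 0 := by
        simp only [maxAvg, integral_undef (hnone t ht), mul_zero]
      rw [h1, zero_mul, Real.zero_rpow hq0.ne', zero_div, ENNReal.ofReal_zero]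
    rw [hzero, ENNReal.zero_rpow_of_pos (by positivity), one_mul]
    exact zero_le

  · -- main case: fstar locally integrable
    have hn1 : (1:ℝ) < n := by exact_mod_cast hn
    have hn0 : (0:ℝ) < n := by linarith
    have hp0 : (0:ℝ) < p := by linarith
    have hpinv : 1/(n:ℝ) < 1/p := one_div_lt_one_div_of_lt hp0 hpn
    have hAeq : 1/(n:ℝ) + 1/pbar = 1/p := by rw [hpbar]; ring
    have hApos : 0 < 1/pbar := by rw [hpbar]; linarith
    have Fnn : ∀ t : ℝ, t ∈ Ioi (0:ℝ) → 0 ≤ maxAvg fstar t := by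
      intro t ht
      have ht' : 0 < t := ht
      exact mul_nonneg (by positivity)
        (setIntegral_nonneg measurableSet_Ioo (fun x hx => hfnn x hx.1))
    have hloc : ∀ T : ℝ, 0 < T → IntegrableOn fstar (Ioo 0 T) volume := by
      intro T hT
      rcases le_or_gt T 1 with h | h
      · exact hfi.mono_set (Ioo_subset_Ioo le_rfl h)
      · have hmeas : AEMeasurable fstar (volume.restrict (Ico 1 T)) :=
          aemeasurable_restrict_of_antitoneOn measurableSet_Ico
            (hfmono.mono (fun x hx => mem_Ioi.mpr (lt_of_lt_of_le one_pos hx.1)))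
        have hb : IntegrableOn fstar (Ico 1 T) volume := by
          apply Integrable.mono' (g := fun _ => fstar 1)
            (integrableOn_const measure_Ico_lt_top.ne)
            hmeas.aestronglyMeasurable
          filter_upwards [ae_restrict_mem measurableSet_Ico] with s hs
          rw [Real.norm_eq_abs, abs_of_nonneg (hfnn s (mem_Ioi.mpr (lt_of_lt_of_le one_pos hs.1)))]
          exact hfmono (mem_Ioi.mpr one_pos) (mem_Ioi.mpr (lt_of_lt_of_le one_pos hs.1)) hs.1
        refine (hfi.union hb).mono_set ?_
        intro x hx
        rcases lt_or_ge x 1 with hxt | hxt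
        · exact Or.inl ⟨hx.1, hxt⟩
        · exact Or.inr ⟨hxt, hx.2⟩
    obtain ⟨g', hg'm, hg'⟩ := exists_measurable_ext hgmono
    set ψ : ℝ → ℝ≥0∞ := fun u => ENNReal.ofReal (u ^ (1/p) * g' u) with hψdef
    have hψm : Measurable ψ :=
      ENNReal.measurable_ofReal.comp
        ((Real.continuous_rpow_const (by positivity)).measurable.mul hg'm)
    set Kf : ℕ × ℕ → ℝ := fun ji => c * ((2:ℝ)^(ji.1+1))^(1/(n:ℝ)) * ((2:ℝ)^(ji.2+1))⁻¹
        * ((2:ℝ)^(ji.1+1) * ((2:ℝ)^(ji.2+1))⁻¹)^(-(1/p)) with hKdef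
    set af : ℕ × ℕ → ℝ := fun ji => (2:ℝ)^(ji.1+1) * ((2:ℝ)^(ji.2+1))⁻¹ with hadef
    have haf0 : ∀ ji : ℕ × ℕ, 0 < af ji := fun ji => by
      rw [hadef]; positivity
    have hKnn : ∀ ji : ℕ × ℕ, 0 ≤ Kf ji := fun ji => by
      rw [hKdef]
      have := Real.rpow_nonneg (le_of_lt (by positivity : (0:ℝ) < (2:ℝ)^(ji.1+1) * ((2:ℝ)^(ji.2+1))⁻¹)) (-(1/p))
      positivity
    -- the pointwise bound
    have hptw : ∀ t : ℝ, 0 < t →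
        ENNReal.ofReal (maxAvg fstar t * t ^ (1/pbar))
          ≤ ∑' ji : ℕ × ℕ, ENNReal.ofReal (Kf ji) * ψ (af ji * t) := by
      intro t ht
      rw [ENNReal.tsum_prod']
      have hb := my_stepB hc hfmono hgnn hloc hpt htop ht
      calc ENNReal.ofReal (maxAvg fstar t * t ^ (1/pbar))
          = ENNReal.ofReal (maxAvg fstar t) * ENNReal.ofReal (t ^ (1/pbar)) :=
            ENNReal.ofReal_mul (Fnn t ht)
        _ ≤ (∑' j : ℕ, ENNReal.ofReal
              (c * ((2:ℝ)^(j+1) * t)^(1/(n:ℝ)) * maxAvg gstar ((2:ℝ)^(j+1)*t)))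
              * ENNReal.ofReal (t ^ (1/pbar)) := mul_le_mul_left hb _
        _ = ∑' j : ℕ, ENNReal.ofReal (c * ((2:ℝ)^(j+1) * t)^(1/(n:ℝ)))
              * ENNReal.ofReal (maxAvg gstar ((2:ℝ)^(j+1)*t))
              * ENNReal.ofReal (t ^ (1/pbar)) := by
            rw [ENNReal.tsum_mul_right]
            congr 1
            apply tsum_congr
            intro j
            rw [ENNReal.ofReal_mul (by positivity)]
        _ ≤ ∑' j : ℕ, ENNReal.ofReal (c * ((2:ℝ)^(j+1) * t)^(1/(n:ℝ)))
              * (∑' i : ℕ, ENNReal.ofReal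
                  (((2:ℝ)^(i+1))⁻¹ * gstar (((2:ℝ)^(i+1))⁻¹ * ((2:ℝ)^(j+1)*t))))
              * ENNReal.ofReal (t ^ (1/pbar)) := by
            apply ENNReal.tsum_le_tsum
            intro j
            exact mul_le_mul_left
              (mul_le_mul_right (my_stepC hgmono hgnn (by positivity)) _) _
        _ = ∑' (j : ℕ) (i : ℕ), ENNReal.ofReal (Kf (j,i)) * ψ (af (j,i) * t) := by
            apply tsum_congr
            intro j
            rw [← ENNReal.tsum_mul_left, ← ENNReal.tsum_mul_right]
            apply tsum_congr
            intro i
            -- single term identity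
            have harg : 0 < af (j,i) * t := mul_pos (haf0 (j,i)) ht
            have e5 : ((2:ℝ)^(i+1))⁻¹ * ((2:ℝ)^(j+1)*t) = af (j,i) * t := by
              rw [hadef]; ring
            have e1 : ((2:ℝ)^(j+1) * t)^(1/(n:ℝ))
                = ((2:ℝ)^(j+1))^(1/(n:ℝ)) * t^(1/(n:ℝ)) :=
              Real.mul_rpow (by positivity) ht.le
            have e2 : (af (j,i) * t)^(1/p) = (af (j,i))^(1/p) * t^(1/p) :=
              Real.mul_rpow (haf0 (j,i)).le ht.le
            have e3 : t^(1/(n:ℝ)) * t^(1/pbar) = t^(1/p) := by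
              rw [← Real.rpow_add ht, hAeq]
            have e4 : (af (j,i))^(-(1/p)) * (af (j,i))^(1/p) = 1 := by
              rw [← Real.rpow_add (haf0 (j,i))]
              simp
            have hgnn' : 0 ≤ gstar (af (j,i) * t) := hgnn _ (mem_Ioi.mpr harg)
            have E : (c * ((2:ℝ)^(j+1) * t)^(1/(n:ℝ)))
                  * (((2:ℝ)^(i+1))⁻¹ * gstar (((2:ℝ)^(i+1))⁻¹ * ((2:ℝ)^(j+1)*t)))
                  * t^(1/pbar)
                = Kf (j,i) * ((af (j,i) * t)^(1/p) * g' (af (j,i) * t)) := by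
              rw [e5, hg' _ harg, e1, e2]
              calc c * (((2:ℝ)^(j+1))^(1/(n:ℝ)) * t^(1/(n:ℝ)))
                    * (((2:ℝ)^(i+1))⁻¹ * gstar (af (j,i) * t)) * t^(1/pbar)
                  = (c * ((2:ℝ)^(j+1))^(1/(n:ℝ)) * ((2:ℝ)^(i+1))⁻¹
                      * gstar (af (j,i) * t)) * (t^(1/(n:ℝ)) * t^(1/pbar)) := by ring
                _ = (c * ((2:ℝ)^(j+1))^(1/(n:ℝ)) * ((2:ℝ)^(i+1))⁻¹
                      * gstar (af (j,i) * t)) * t^(1/p) := by rw [e3]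
                _ = (c * ((2:ℝ)^(j+1))^(1/(n:ℝ)) * ((2:ℝ)^(i+1))⁻¹
                      * ((af (j,i))^(-(1/p)) * (af (j,i))^(1/p))
                      * gstar (af (j,i) * t)) * t^(1/p) := by rw [e4]; ring
                _ = Kf (j,i) * ((af (j,i))^(1/p) * t^(1/p) * gstar (af (j,i) * t)) := by
                    rw [hKdef, hadef]; ring
            calc ENNReal.ofReal (c * ((2:ℝ)^(j+1) * t)^(1/(n:ℝ)))
                  * ENNReal.ofReal
                      (((2:ℝ)^(i+1))⁻¹ * gstar (((2:ℝ)^(i+1))⁻¹ * ((2:ℝ)^(j+1)*t)))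
                  * ENNReal.ofReal (t ^ (1/pbar))
                = ENNReal.ofReal ((c * ((2:ℝ)^(j+1) * t)^(1/(n:ℝ)))
                    * (((2:ℝ)^(i+1))⁻¹ * gstar (((2:ℝ)^(i+1))⁻¹ * ((2:ℝ)^(j+1)*t)))
                    * (t ^ (1/pbar))) := by
                  have hgs : 0 ≤ gstar (((2:ℝ)^(i+1))⁻¹ * ((2:ℝ)^(j+1)*t)) := by
                    rw [e5]; exact hgnn'
                  have comb : ENNReal.ofReal ((c * ((2:ℝ)^(j+1) * t)^(1/(n:ℝ)))
                      * (((2:ℝ)^(i+1))⁻¹ * gstar (((2:ℝ)^(i+1))⁻¹ * ((2:ℝ)^(j+1)*t)))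
                      * (t ^ (1/pbar)))
                      = ENNReal.ofReal (c * ((2:ℝ)^(j+1) * t)^(1/(n:ℝ)))
                        * ENNReal.ofReal
                            (((2:ℝ)^(i+1))⁻¹ * gstar (((2:ℝ)^(i+1))⁻¹ * ((2:ℝ)^(j+1)*t)))
                        * ENNReal.ofReal (t ^ (1/pbar)) := by
                    rw [ENNReal.ofReal_mul
                        (mul_nonneg (by positivity) (mul_nonneg (by positivity) hgs)),
                      ENNReal.ofReal_mul (by positivity)]
                  exact comb.symm
              _ = ENNReal.ofReal (Kf (j,i) * ((af (j,i) * t)^(1/p) * g' (af (j,i) * t))) := by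
                  rw [E]
              _ = ENNReal.ofReal (Kf (j,i)) * ψ (af (j,i) * t) := by
                  rw [ENNReal.ofReal_mul (hKnn (j,i))]
    -- measure with density 1/t
    set ν : Measure ℝ := (volume.restrict (Ioi (0:ℝ))).withDensity
        (fun t => ENNReal.ofReal t⁻¹) with hν
    have hconv : ∀ f : ℝ → ℝ≥0∞,
        ∫⁻ x, f x ∂ν = ∫⁻ t in Ioi (0:ℝ), f t * ENNReal.ofReal t⁻¹ := by
      intro f
      rw [hν, lintegral_withDensity_eq_lintegral_mul_non_measurable _
        (measurable_inv.ennreal_ofReal : Measurable fun t : ℝ => ENNReal.ofReal t⁻¹)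
        (Filter.Eventually.of_forall (fun x => ENNReal.ofReal_lt_top)) f]
      apply lintegral_congr
      intro t
      simp [mul_comm]
    have hLrw : (∫⁻ t in Ioi (0:ℝ),
          ENNReal.ofReal ((maxAvg fstar t * t ^ (1/pbar)) ^ q / t))
        = ∫⁻ x, (ENNReal.ofReal (maxAvg fstar x * x ^ (1/pbar))) ^ q ∂ν := by
      rw [hconv]
      apply setLIntegral_congr_fun_ae measurableSet_Ioi
      filter_upwards with t ht
      have ht' : (0:ℝ) < t := ht
      have hx : 0 ≤ maxAvg fstar t * t ^ (1/pbar) :=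
        mul_nonneg (Fnn t ht) (Real.rpow_nonneg ht'.le _)
      rw [div_eq_mul_inv, ENNReal.ofReal_mul (Real.rpow_nonneg hx q),
        ← ENNReal.ofReal_rpow_of_nonneg hx hq0.le]
    have hRrw : (∫⁻ t in Ioi (0:ℝ), ENNReal.ofReal ((gstar t * t ^ (1/p)) ^ q / t))
        = ∫⁻ x, (ψ x) ^ q ∂ν := by
      rw [hconv]
      apply setLIntegral_congr_fun_ae measurableSet_Ioi
      filter_upwards with u hu
      have hu' : (0:ℝ) < u := hu
      have hx : 0 ≤ gstar u * u ^ (1/p) :=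
        mul_nonneg (hgnn u hu) (Real.rpow_nonneg hu'.le _)
      have hψu : ψ u = ENNReal.ofReal (gstar u * u ^ (1/p)) := by
        rw [hψdef]
        simp only
        rw [hg' u hu', mul_comm]
      rw [div_eq_mul_inv, ENNReal.ofReal_mul (Real.rpow_nonneg hx q),
        ← ENNReal.ofReal_rpow_of_nonneg hx hq0.le, hψu]
    set e : ℕ ≃ ℕ × ℕ := (Denumerable.eqv (ℕ × ℕ)).symm with he
    set Hk : ℕ → ℝ → ℝ≥0∞ := fun k t => ENNReal.ofReal (Kf (e k)) * ψ (af (e k) * t)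
      with hHk
    have hHkm : ∀ k, Measurable (Hk k) :=
      fun k => (hψm.comp (measurable_const_mul _)).const_mul _
    have htsum_eq : ∀ t : ℝ,
        (∑' k, Hk k t) = ∑' ji : ℕ × ℕ, ENNReal.ofReal (Kf ji) * ψ (af ji * t) :=
      fun t => e.tsum_eq (fun ji => ENNReal.ofReal (Kf ji) * ψ (af ji * t))
    have hmain1 : (∫⁻ x, (ENNReal.ofReal (maxAvg fstar x * x ^ (1/pbar))) ^ q ∂ν)
        ≤ ∫⁻ x, (∑' k, Hk k x) ^ q ∂ν := by
      apply lintegral_mono_ae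
      have hae : ∀ᵐ x ∂ν, x ∈ Ioi (0:ℝ) :=
        ((ae_restrict_mem measurableSet_Ioi).filter_mono
          (withDensity_absolutelyContinuous _ _).ae_le)
      filter_upwards [hae] with x hx
      apply ENNReal.rpow_le_rpow _ hq0.le
      rw [htsum_eq x]
      exact hptw x hx
    have hmain2 := my_minkowski (μ := ν) hq Hk hHkm
    have hperk : ∀ k, (∫⁻ x, (Hk k x) ^ q ∂ν) ^ (1/q)
        = ENNReal.ofReal (Kf (e k)) * (∫⁻ x, (ψ x) ^ q ∂ν) ^ (1/q) := by
      intro k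
      have h1 : ∫⁻ x, (Hk k x) ^ q ∂ν
          = (ENNReal.ofReal (Kf (e k))) ^ q * ∫⁻ x, (ψ x) ^ q ∂ν := by
        rw [hconv, hconv,
          ← my_scale (fun u => (ψ u)^q)
            (ENNReal.continuous_rpow_const.measurable.comp hψm) (haf0 (e k)),
          ← lintegral_const_mul' _ _
            (ENNReal.rpow_ne_top_of_nonneg hq0.le ENNReal.ofReal_ne_top)]
        apply setLIntegral_congr_fun_ae measurableSet_Ioi
        filter_upwards with t ht
        rw [hHk]
        simp only
        rw [ENNReal.mul_rpow_of_nonneg _ _ hq0.le, mul_assoc]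
      rw [h1, ENNReal.mul_rpow_of_nonneg _ _ (by positivity), ← ENNReal.rpow_mul,
        mul_one_div, div_self hq0.ne', ENNReal.rpow_one]
    set C := ∑' ji : ℕ × ℕ, ENNReal.ofReal (Kf ji) with hC
    have hCsum : (∑' k, ENNReal.ofReal (Kf (e k))) = C :=
      e.tsum_eq (fun ji => ENNReal.ofReal (Kf ji))
    -- finiteness of C
    set ρ1 : ℝ := (2:ℝ)^(1/(n:ℝ) - 1/p) with hρ1
    set ρ2 : ℝ := (2:ℝ)^(1/p - 1) with hρ2
    have hρ1pos : 0 < ρ1 := Real.rpow_pos_of_pos two_pos _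
    have hρ2pos : 0 < ρ2 := Real.rpow_pos_of_pos two_pos _
    have hρ1lt : ρ1 < 1 :=
      Real.rpow_lt_one_of_one_lt_of_neg one_lt_two (by linarith)
    have hρ2lt : ρ2 < 1 := by
      apply Real.rpow_lt_one_of_one_lt_of_neg one_lt_two
      have : 1/p < 1 := by rw [div_lt_one hp0]; exact hp
      linarith
    have h2 : (0:ℝ) < 2 := two_pos
    have hKval : ∀ j i : ℕ, Kf (j,i) = c * ρ1^(j+1) * ρ2^(i+1) := by
      intro j i
      have key : ∀ s r : ℝ, (2:ℝ)^s * (2:ℝ)^r = 2^(s+r) :=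
        fun s r => (Real.rpow_add h2 s r).symm
      have hb1 : ((2:ℝ)^(j+1))^((1:ℝ)/(n:ℝ)) = (2:ℝ)^(((j:ℝ)+1) * (1/(n:ℝ))) := by
        rw [← Real.rpow_natCast (2:ℝ) (j+1), ← Real.rpow_mul h2.le]
        congr 1
        push_cast
        ring
      have hb2 : (((2:ℝ)^(i+1))⁻¹ : ℝ) = (2:ℝ)^(-((i:ℝ)+1)) := by
        rw [← Real.rpow_natCast (2:ℝ) (i+1), ← Real.rpow_neg h2.le]
        congr 1
        push_cast
        ring
      have hb3 : ((2:ℝ)^(j+1) : ℝ) = (2:ℝ)^(((j:ℝ)+1)) := by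
        rw [← Real.rpow_natCast (2:ℝ) (j+1)]
        congr 1
        push_cast
        ring
      have hr1 : ρ1^(j+1) = (2:ℝ)^((1/(n:ℝ) - 1/p) * ((j:ℝ)+1)) := by
        rw [hρ1, ← Real.rpow_natCast ((2:ℝ)^(1/(n:ℝ) - 1/p)) (j+1),
          ← Real.rpow_mul h2.le]
        congr 1
        push_cast
        ring
      have hr2 : ρ2^(i+1) = (2:ℝ)^((1/p - 1) * ((i:ℝ)+1)) := by
        rw [hρ2, ← Real.rpow_natCast ((2:ℝ)^(1/p - 1)) (i+1),
          ← Real.rpow_mul h2.le]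
        congr 1
        push_cast
        ring
      rw [hKdef]
      simp only
      rw [hb1, hb2, hb3, key, ← Real.rpow_mul h2.le, hr1, hr2]
      calc c * (2:ℝ)^(((j:ℝ)+1) * (1/(n:ℝ))) * (2:ℝ)^(-((i:ℝ)+1))
            * (2:ℝ)^((((j:ℝ)+1) + -((i:ℝ)+1)) * (-(1/p)))
          = c * ((2:ℝ)^(((j:ℝ)+1) * (1/(n:ℝ))) * ((2:ℝ)^(-((i:ℝ)+1))
              * (2:ℝ)^((((j:ℝ)+1) + -((i:ℝ)+1)) * (-(1/p))))) := by ring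
        _ = c * ((2:ℝ)^(((j:ℝ)+1) * (1/(n:ℝ)))
              * (2:ℝ)^(-((i:ℝ)+1) + (((j:ℝ)+1) + -((i:ℝ)+1)) * (-(1/p)))) := by rw [key]
        _ = c * (2:ℝ)^(((j:ℝ)+1) * (1/(n:ℝ))
              + (-((i:ℝ)+1) + (((j:ℝ)+1) + -((i:ℝ)+1)) * (-(1/p)))) := by rw [key]
        _ = c * (2:ℝ)^((1/(n:ℝ) - 1/p) * ((j:ℝ)+1) + (1/p - 1) * ((i:ℝ)+1)) := by
            congr 1
            ring
        _ = c * ((2:ℝ)^((1/(n:ℝ) - 1/p) * ((j:ℝ)+1))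
              * (2:ℝ)^((1/p - 1) * ((i:ℝ)+1))) := by rw [key]
        _ = c * (2:ℝ)^((1/(n:ℝ) - 1/p) * ((j:ℝ)+1)) * (2:ℝ)^((1/p - 1) * ((i:ℝ)+1)) := by
            ring
    have hgeo : ∀ ρ : ℝ, 0 < ρ → ρ < 1 → (∑' m : ℕ, ENNReal.ofReal (ρ^(m+1))) ≠ ⊤ := by
      intro ρ hρ0 hρ1'
      have hpow : ∀ m : ℕ, ENNReal.ofReal (ρ^(m+1)) = (ENNReal.ofReal ρ)^(m+1) :=
        fun m => by rw [ENNReal.ofReal_pow hρ0.le]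
      have heq : (∑' m : ℕ, ENNReal.ofReal (ρ^(m+1)))
          = ENNReal.ofReal ρ * ∑' m : ℕ, (ENNReal.ofReal ρ)^m := by
        rw [← ENNReal.tsum_mul_left]
        apply tsum_congr
        intro m
        rw [hpow, pow_succ, mul_comm]
      rw [heq, ENNReal.tsum_geometric]
      apply ENNReal.mul_ne_top ENNReal.ofReal_ne_top
      rw [Ne, ENNReal.inv_eq_top]
      intro hcon
      have : (1:ℝ≥0∞) ≤ ENNReal.ofReal ρ := tsub_eq_zero_iff_le.mp hcon
      rw [← ENNReal.ofReal_one] at this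
      have := (ENNReal.ofReal_le_ofReal_iff hρ0.le).mp this
      linarith
    have hCval : C = ENNReal.ofReal c * (∑' j : ℕ, ENNReal.ofReal (ρ1^(j+1)))
        * (∑' i : ℕ, ENNReal.ofReal (ρ2^(i+1))) := by
      rw [hC, ENNReal.tsum_prod']
      calc (∑' (j : ℕ) (i : ℕ), ENNReal.ofReal (Kf (j,i)))
          = ∑' (j : ℕ), (ENNReal.ofReal c * ENNReal.ofReal (ρ1^(j+1)))
              * ∑' (i : ℕ), ENNReal.ofReal (ρ2^(i+1)) := by
            apply tsum_congr
            intro j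
            rw [← ENNReal.tsum_mul_left]
            apply tsum_congr
            intro i
            rw [hKval j i, ENNReal.ofReal_mul (mul_nonneg hc (by positivity)),
              ENNReal.ofReal_mul hc]
        _ = (∑' (j : ℕ), ENNReal.ofReal c * ENNReal.ofReal (ρ1^(j+1)))
              * ∑' (i : ℕ), ENNReal.ofReal (ρ2^(i+1)) := ENNReal.tsum_mul_right
        _ = ENNReal.ofReal c * (∑' j : ℕ, ENNReal.ofReal (ρ1^(j+1)))
              * (∑' i : ℕ, ENNReal.ofReal (ρ2^(i+1))) := by
            rw [ENNReal.tsum_mul_left]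
    have hCne : C ≠ ⊤ := by
      rw [hCval]
      exact ENNReal.mul_ne_top
        (ENNReal.mul_ne_top ENNReal.ofReal_ne_top (hgeo ρ1 hρ1pos hρ1lt))
        (hgeo ρ2 hρ2pos hρ2lt)
    refine ⟨C, hCne, ?_⟩
    calc (∫⁻ t in Ioi (0:ℝ),
          ENNReal.ofReal ((maxAvg fstar t * t ^ (1/pbar)) ^ q / t)) ^ (1/q)
        = (∫⁻ x, (ENNReal.ofReal (maxAvg fstar x * x ^ (1/pbar))) ^ q ∂ν) ^ (1/q) := by
          rw [hLrw]
      _ ≤ (∫⁻ x, (∑' k, Hk k x) ^ q ∂ν) ^ (1/q) :=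
          ENNReal.rpow_le_rpow hmain1 (by positivity)
      _ ≤ ∑' k, (∫⁻ x, (Hk k x) ^ q ∂ν) ^ (1/q) := hmain2
      _ = ∑' k, ENNReal.ofReal (Kf (e k)) * (∫⁻ x, (ψ x) ^ q ∂ν) ^ (1/q) :=
          tsum_congr hperk
      _ = (∑' k, ENNReal.ofReal (Kf (e k))) * (∫⁻ x, (ψ x) ^ q ∂ν) ^ (1/q) :=
          ENNReal.tsum_mul_right
      _ = C * (∫⁻ t in Ioi (0:ℝ),
            ENNReal.ofReal ((gstar t * t ^ (1/p)) ^ q / t)) ^ (1/q) := by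
          rw [hCsum, hRrw]
end
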